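/- In the ring ℤ[a,a⁻¹] of Laurent polynomials over the integers, the ideal generated by the two elements a⁹ + 1 and a⁻⁶ + 1 + a⁶ is equal to the (principal) ideal generated by a⁶ − a³ + 1. -/

import Mathlib

open LaurentPolynomial

theorem Ideal.span_pow_three_add_one_pair_eq {R : Type*} [CommRing R] {x y : R} (hxy : x * y = 1) :
    Ideal.span {x ^ 3 + 1, y ^ 2 + 1 + x ^ 2} = Ideal.span {x ^ 2 - x + 1} := by
  apply le_antisymm
  · rw [Ideal.span_le, Set.insert_subset_iff, Set.singleton_subset_iff]
    constructor
    · exact Ideal.mem_span_singleton.2 ⟨x + 1, by ring⟩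
    · exact Ideal.mem_span_singleton.2 ⟨y ^ 2 + y + 1, by linear_combination (-(x * y) - x + y) * hxy⟩
  · rw [Ideal.span_singleton_le_iff_mem, Ideal.mem_span_pair]
    exact ⟨-x, x ^ 2, by linear_combination (x * y + 1) * hxy⟩

/-- In the ring `ℤ[a,a⁻¹]` of Laurent polynomials over the integers, the ideal generated by
`a⁹ + 1` and `a⁻⁶ + 1 + a⁶` equals the principal ideal generated by `a⁶ - a³ + 1`. -/
theorem stmt_0 :
    Ideal.span ({T 9 + 1, T (-6) + 1 + T 6} : Set (LaurentPolynomial ℤ)) =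
      Ideal.span ({T 6 - T 3 + 1} : Set (LaurentPolynomial ℤ)) := by
  have hT : (T 3 : LaurentPolynomial ℤ) * T (-3) = 1 := by rw [← T_add, add_neg_cancel, T_zero]
  have h9 : (T 9 : LaurentPolynomial ℤ) = T 3 ^ 3 := by rw [T_pow]; norm_num
  have h6 : (T 6 : LaurentPolynomial ℤ) = T 3 ^ 2 := by rw [T_pow]; norm_num
  have hneg6 : (T (-6) : LaurentPolynomial ℤ) = T (-3) ^ 2 := by rw [T_pow]; norm_num
  rw [h9, h6, hneg6]
  exact Ideal.span_pow_three_add_one_pair_eq hT
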